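/- Let p be a prime, e ≥ 1, k ≥ 1, c ≥ 1 integers, and set m = ⌊log_p k⌋. Let F be a free group and R a normal subgroup of F such that γ_{k+1}(F) ≤ R and x^(p^e) ∈ R for every x ∈ F (so that G = F/R is a p-group of nilpotency class at most k and exponent dividing p^e). Then for every g ∈ γ_{c+1}(F), one has g^(p^(e+m(k−1))) ∈ [R, cF]; that is, the exponent of the group γ_{c+1}(F)/[R, cF] divides p^(e+m(k−1)). -/

import Mathlib

/-!
Pass to `G = F ⧸ [R, cF]`. There `γ_{c+k+1}(G) = 1`, and `p^e`-th powers centralise `γ_c(G)`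
because `⁅γ_c(F), R⁆ ≤ [R, cF]`. By descending induction on `ℓ ≥ c`, the exponent of
`γ_{ℓ+1}(G)` divides `p^(e + m(c+k-1-ℓ))`, where `m = ⌊log_p k⌋`.

For `N = p^s`, the `N`-th power map on `γ_{ℓ+1}` is multiplicative and sends each generator
`⁅h, a⁆` to `⁅h, a^N⁆ = 1`, up to correction terms. These come from a collection argument of
Hall–Petrescu type. As functions of `n`, the deviations `(x^n y^n)⁻¹ (xy)^n` and
`(⁅u, a⁆^n)⁻¹ ⁅u, a^n⁆` are products of conjugates of `w^(n choose d)` with `d ≥ 1`,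
`w ∈ γ_{ℓ+d}` and `w ∈ γ_{ℓ+2}`. At `n = p^s` they all vanish: `p^(s-m)` divides
`(p^s choose d)` for `1 ≤ d ≤ k`, and `p^(s-m)` kills the deeper terms by induction.
Such products are closed under a twisted summation in `n`, which raises `d` by one. This
closure is proved by descending induction on the level `lv` of `w`, because the
commutators it produces lie one level deeper.
-/

/-- `[R, cF]`: the iterated commutator subgroup, `[R, 0F] = R`,
`[R, (i+1)F] = ⁅[R, iF], F⁆`. -/
def iteratedCommutator {F : Type*} [Group F] (R : Subgroup F) : ℕ → Subgroup F
  | 0 => R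
  | c + 1 => ⁅iteratedCommutator R c, (⊤ : Subgroup F)⁆

open scoped commutatorElement

theorem Nat.pow_sub_log_dvd_choose_prime_pow {p k s d : ℕ} (hp : p.Prime) (hd : 1 ≤ d)
    (hdk : d ≤ k) : p ^ (s - Nat.log p k) ∣ (p ^ s).choose d := by
  rcases le_or_gt d (p ^ s) with hds | hds
  · have hv : d.factorization p ≤ Nat.log p k :=
      Nat.le_log_of_pow_le hp.one_lt ((Nat.ordProj_le p (by omega)).trans hdk)
    rw [hp.pow_dvd_iff_le_factorization (Nat.choose_pos hds).ne',
      Nat.factorization_choose_prime_pow hp hds (by omega)]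
    omega
  · rw [Nat.choose_eq_zero_of_lt hds]
    exact dvd_zero _

section

variable {G : Type*} [Group G]

-- `γ n` is the paper's `γ_{n+1}`: Mathlib starts the lower central series at `γ 0 = ⊤`.
local notation "γ" => Subgroup.lowerCentralSeries (⊤ : Subgroup G)

theorem Subgroup.commutator_commutator_le_of_rotate {H₁ H₂ H₃ N : Subgroup G} [N.Normal]
    (h₁ : ⁅⁅H₂, H₃⁆, H₁⁆ ≤ N) (h₂ : ⁅⁅H₃, H₁⁆, H₂⁆ ≤ N) : ⁅⁅H₁, H₂⁆, H₃⁆ ≤ N := by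
  have hq : ∀ A B : Subgroup G, ⁅A, B⁆ ≤ N ↔
      ⁅A.map (QuotientGroup.mk' N), B.map (QuotientGroup.mk' N)⁆ = ⊥ := fun A B => by
    rw [← Subgroup.map_commutator, Subgroup.map_eq_bot_iff, QuotientGroup.ker_mk']
  rw [hq, Subgroup.map_commutator] at h₁ h₂ ⊢
  exact Subgroup.commutator_commutator_eq_bot_of_rotate h₁ h₂

instance iteratedCommutator_normal (R : Subgroup G) [R.Normal] :
    ∀ c, (iteratedCommutator R c).Normal
  | 0 => ‹R.Normal›
  | c + 1 => by
    have := iteratedCommutator_normal R c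
    exact Subgroup.commutator_normal (iteratedCommutator R c) ⊤

theorem iteratedCommutator_top (n : ℕ) :
    iteratedCommutator (⊤ : Subgroup G) n = γ n := by
  induction n with
  | zero => rfl
  | succ n ih => rw [iteratedCommutator, ih, Subgroup.lowerCentralSeries_succ]

theorem commutator_lowerCentralSeries_iteratedCommutator_le (R : Subgroup G) [R.Normal] (i : ℕ) :
    ∀ j, ⁅γ i, iteratedCommutator R j⁆ ≤ iteratedCommutator R (i + j + 1) := by
  induction i with
  | zero =>
    intro j
    rw [Subgroup.lowerCentralSeries_zero, Subgroup.commutator_comm, zero_add]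
    rfl
  | succ i ih =>
    intro j
    rw [Subgroup.lowerCentralSeries_succ, show i + 1 + j + 1 = i + (j + 1) + 1 by omega]
    refine Subgroup.commutator_commutator_le_of_rotate ?_ ?_
    · rw [Subgroup.commutator_comm ⊤, Subgroup.commutator_comm]
      exact ih (j + 1)
    · rw [Subgroup.commutator_comm (iteratedCommutator R j)]
      exact Subgroup.commutator_mono (ih j) le_rfl

theorem commutator_lowerCentralSeries_le (i j : ℕ) :
    ⁅γ i, γ j⁆ ≤ γ (i + j + 1) := by
  simpa only [iteratedCommutator_top] using
    commutator_lowerCentralSeries_iteratedCommutator_le (⊤ : Subgroup G) i j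

theorem commutatorElement_mem_lowerCentralSeries {x y : G} {i j n : ℕ}
    (hx : x ∈ γ i) (hy : y ∈ γ j) (hn : n ≤ i + j + 1) :
    ⁅x, y⁆ ∈ γ n :=
  Subgroup.lowerCentralSeries_antitone _ hn
    (commutator_lowerCentralSeries_le i j (Subgroup.commutator_mem_commutator hx hy))

theorem commutatorElement_mem_lowerCentralSeries_succ {u : G} {α : ℕ} (hu : u ∈ γ α) (a : G) :
    ⁅u, a⁆ ∈ γ (α + 1) :=
  Subgroup.commutator_mem_commutator hu (Subgroup.mem_top a)

theorem eq_one_of_mem_lowerCentralSeries_of_le {J n : ℕ} (hJ : γ J = ⊥) (h : J ≤ n) {g : G}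
    (hg : g ∈ γ n) : g = 1 :=
  Subgroup.mem_bot.mp (hJ ▸ Subgroup.lowerCentralSeries_antitone _ h hg)

theorem lowerCentralSeries_add_le_iteratedCommutator {R : Subgroup G} {k : ℕ}
    (hR : γ k ≤ R) : ∀ j, γ (k + j) ≤ iteratedCommutator R j
  | 0 => hR
  | j + 1 => Subgroup.commutator_mono (lowerCentralSeries_add_le_iteratedCommutator hR j) le_rfl

-- Constants are the case `j = 0`.
variable (G) in
def binomialSeqs : Subgroup (ℕ → G) :=
  Subgroup.closure {f | ∃ (v : G) (j : ℕ), v ∈ γ j ∧ f = fun n => v ^ n.choose j}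

theorem binomial_mem_binomialSeqs {v : G} {j lv : ℕ} (hv : v ∈ γ lv) (hj : j ≤ lv) :
    (fun n => v ^ n.choose j) ∈ binomialSeqs G :=
  Subgroup.subset_closure ⟨v, j, Subgroup.lowerCentralSeries_antitone _ hj hv, rfl⟩

theorem const_mem_binomialSeqs (g : G) : (fun _ => g) ∈ binomialSeqs G := by
  simpa using binomial_mem_binomialSeqs (j := 0) (Subgroup.mem_top g : g ∈ γ 0) le_rfl

def correctionSeqs (P : ℕ → ℕ → Prop) : Subgroup (ℕ → G) :=
  Subgroup.closure {f | ∃ (w : G) (d lv : ℕ), w ∈ γ lv ∧ P d lv ∧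
    ∃ χ ∈ binomialSeqs G, f = χ * (fun n => w ^ n.choose d) * χ⁻¹}

variable {P Q : ℕ → ℕ → Prop}

theorem binomial_mem_correctionSeqs {w : G} {d lv : ℕ} (hw : w ∈ γ lv) (hP : P d lv) :
    (fun n => w ^ n.choose d) ∈ correctionSeqs P :=
  Subgroup.subset_closure ⟨w, d, lv, hw, hP, 1, one_mem _, by simp⟩

theorem conj_mem_correctionSeqs {ψ f : ℕ → G} (hψ : ψ ∈ binomialSeqs G)
    (hf : f ∈ correctionSeqs P) : ψ * f * ψ⁻¹ ∈ correctionSeqs P := by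
  induction hf using Subgroup.closure_induction with
  | mem f hf =>
    obtain ⟨w, d, lv, hw, hP, χ, hχ, rfl⟩ := hf
    exact Subgroup.subset_closure ⟨w, d, lv, hw, hP, ψ * χ, mul_mem hψ hχ, by group⟩
  | one => simp
  | mul f₁ f₂ _ _ ih₁ ih₂ => simpa [mul_assoc] using mul_mem ih₁ ih₂
  | inv f _ ih => simpa [mul_assoc] using inv_mem ih

theorem correctionSeqs_mono (hPQ : ∀ d lv, P d lv → Q d lv) :
    correctionSeqs P ≤ correctionSeqs (G := G) Q := by
  refine Subgroup.closure_mono ?_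
  rintro f ⟨w, d, lv, hw, hP, hχ⟩
  exact ⟨w, d, lv, hw, hPQ d lv hP, hχ⟩

theorem correctionSeqs_le_binomialSeqs (hP : ∀ d lv, P d lv → d ≤ lv) :
    correctionSeqs P ≤ binomialSeqs G := by
  refine Subgroup.closure_le _ |>.mpr ?_
  rintro f ⟨w, d, lv, hw, hP', χ, hχ, rfl⟩
  exact mul_mem (mul_mem hχ (binomial_mem_binomialSeqs hw (hP d lv hP'))) (inv_mem hχ)

theorem apply_eq_one_of_mem_correctionSeqs {f : ℕ → G} (hf : f ∈ correctionSeqs P) {N : ℕ}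
    (hN : ∀ d lv, P d lv → ∀ w ∈ γ lv, w ^ N.choose d = 1) : f N = 1 := by
  induction hf using Subgroup.closure_induction with
  | mem f hf =>
    obtain ⟨w, d, lv, hw, hP, χ, -, rfl⟩ := hf
    simp [hN d lv hP w hw]
  | one => rfl
  | mul f₁ f₂ _ _ ih₁ ih₂ => simp [ih₁, ih₂]
  | inv f _ ih => simp [ih]

/- An atom `χ * w ^ (n choose d) * χ⁻¹` with `w ∈ γ lv` has degree `d` and weight `lv - d`.
`Weighted r ls` asks for weight `≥ r` and level `≥ ls`. Twisted summation raises the degree by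
one, and `Summed r ls` describes the result. -/
def Weighted (r ls d lv : ℕ) : Prop := r + d ≤ lv ∧ ls ≤ lv

def Summed (r ls d lv : ℕ) : Prop := 1 ≤ d ∧ r + d ≤ lv + 1 ∧ ls ≤ lv

theorem correctionSeqs_summed_succ_le (r ls : ℕ) :
    correctionSeqs (Summed (r + 1) ls) ≤ correctionSeqs (G := G) (Weighted r ls) :=
  correctionSeqs_mono fun _ _ ⟨_, h₁, h₂⟩ => ⟨by omega, h₂⟩

theorem correctionSeqs_weighted_mono {r r' ls ls' : ℕ} (hr : r' ≤ r) (hls : ls' ≤ ls) :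
    correctionSeqs (Weighted r ls) ≤ correctionSeqs (G := G) (Weighted r' ls') :=
  correctionSeqs_mono fun _ _ ⟨h₁, h₂⟩ => ⟨by omega, by omega⟩

theorem correctionSeqs_summed_mono {r ls ls' : ℕ} (hls : ls' ≤ ls) :
    correctionSeqs (Summed r ls) ≤ correctionSeqs (G := G) (Summed r ls') :=
  correctionSeqs_mono fun _ _ ⟨h₁, h₂, h₃⟩ => ⟨h₁, h₂, by omega⟩

theorem correctionSeqs_weighted_le_binomialSeqs (r ls : ℕ) :
    correctionSeqs (Weighted r ls) ≤ binomialSeqs G :=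
  correctionSeqs_le_binomialSeqs fun _ _ h => by unfold Weighted at h; omega

-- For `ξ = 1` this is the partial product `∏_{i<n} g i`.
def twistedProd (ξ g : ℕ → G) : ℕ → G
  | 0 => 1
  | n + 1 => ξ n * twistedProd ξ g n * (ξ n)⁻¹ * g n

theorem eq_twistedProd {ξ g f : ℕ → G} (h₀ : f 0 = 1)
    (hsucc : ∀ n, f (n + 1) = ξ n * f n * (ξ n)⁻¹ * g n) : f = twistedProd ξ g := by
  funext n
  induction n with
  | zero => exact h₀
  | succ n ih => rw [hsucc, ih, twistedProd]

theorem twistedProd_mul (ξ g₁ g₂ : ℕ → G) :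
    twistedProd ξ (g₁ * g₂) = twistedProd ξ g₁ * twistedProd (g₁⁻¹ * ξ) g₂ := by
  refine (eq_twistedProd (by simp [twistedProd]) fun n => ?_).symm
  simp only [Pi.mul_apply, Pi.inv_apply, twistedProd]
  group

theorem twistedProd_one (ξ : ℕ → G) : twistedProd ξ 1 = 1 :=
  (eq_twistedProd rfl fun n => by simp).symm

theorem twistedProd_inv (ξ g : ℕ → G) : twistedProd ξ g⁻¹ = (twistedProd (g * ξ) g)⁻¹ := by
  have := twistedProd_mul (g * ξ) g g⁻¹
  rw [mul_inv_cancel, twistedProd_one, inv_mul_cancel_left] at this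
  exact (eq_inv_of_mul_eq_one_right this.symm)

variable (G) in
def SumClosed (ls : ℕ) : Prop :=
  ∀ r (ξ g : ℕ → G), ξ ∈ binomialSeqs G → g ∈ correctionSeqs (Weighted r ls) →
    twistedProd ξ g ∈ correctionSeqs (Summed r ls)

theorem SumClosed.mem_of_recursion {ls r : ℕ} (hS : SumClosed G ls) {ξ g f : ℕ → G}
    (hξ : ξ ∈ binomialSeqs G) (hg : g ∈ correctionSeqs (Weighted r ls)) (h₀ : f 0 = 1)
    (hsucc : ∀ n, f (n + 1) = ξ n * f n * (ξ n)⁻¹ * g n) :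
    f ∈ correctionSeqs (Summed r ls) := by
  rw [eq_twistedProd h₀ hsucc]
  exact hS r ξ g hξ hg

-- The Pascal rule applied to both entries of `⁅w ^ (n choose D), v ^ (n choose j)⁆`.
theorem commutatorElement_mul_mul (X X' Y Y' : G) :
    ⁅X * X', Y * Y'⁆ =
      (X * ⁅X', Y⁆ * X⁻¹ * ⁅X, Y⁆ * (Y * X)) * ⁅X', Y'⁆ *
        (X * ⁅X', Y⁆ * X⁻¹ * ⁅X, Y⁆ * (Y * X))⁻¹ *
          (X * ⁅X', Y⁆ * X⁻¹ * ⁅X, Y⁆ * (Y * ⁅X, Y'⁆ * Y⁻¹)) := by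
  simp only [commutatorElement_def]
  group

theorem pow_choose_succ_succ (v : G) (n j : ℕ) :
    v ^ (n + 1).choose (j + 1) = v ^ n.choose j * v ^ n.choose (j + 1) := by
  rw [Nat.choose_succ_succ, pow_add]

section

variable {lv : ℕ} {w : G}

theorem commutator_binomial_const_mem (hS : SumClosed G (lv + 1)) (hw : w ∈ γ lv) {y : G}
    {b : ℕ} (hy : y ∈ γ b) : ∀ {D r : ℕ}, r + D ≤ lv + 1 →
      (fun n => ⁅w ^ n.choose D, y⁆) ∈ correctionSeqs (Weighted (r + b) (lv + 1))
  | 0, r, h => by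
    simpa using binomial_mem_correctionSeqs (d := 0)
      (commutatorElement_mem_lowerCentralSeries hw hy le_rfl) ⟨by omega, by omega⟩
  | D + 1, r, h => by
    have hg := commutator_binomial_const_mem hS hw hy (D := D) (r := r + 1) (by omega)
    rw [add_right_comm] at hg
    refine correctionSeqs_summed_succ_le _ _ (hS.mem_of_recursion
      (binomial_mem_binomialSeqs (j := D) hw (by omega)) hg (by simp) fun n => ?_)
    rw [pow_choose_succ_succ, commutatorElement_mul_left_eq_conj_mul]

theorem commutator_binomial_binomial_mem (hS : SumClosed G (lv + 1)) (hw : w ∈ γ lv) {v : G}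
    {lvv : ℕ} (hv : v ∈ γ lvv) : ∀ {j D r τ : ℕ}, r + D ≤ lv + 1 → j + τ ≤ lvv →
      (fun n => ⁅w ^ n.choose D, v ^ n.choose j⁆) ∈ correctionSeqs (Weighted (r + τ) (lv + 1))
  | 0, D, r, τ, h₁, h₂ => by
    refine correctionSeqs_weighted_mono (r := r + lvv) (by omega) le_rfl ?_
    simpa using commutator_binomial_const_mem hS hw hv h₁
  | j + 1, 0, r, τ, h₁, h₂ => by
    have hg := commutator_binomial_binomial_mem hS hw hv (j := j) (D := 0) (τ := τ + 1) h₁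
      (by omega)
    rw [← add_assoc] at hg
    have := correctionSeqs_summed_succ_le _ _ (hS.mem_of_recursion
      (f := (fun n => ⁅w ^ n.choose 0, v ^ n.choose (j + 1)⁆)⁻¹)
      (binomial_mem_binomialSeqs (j := j) hv (by omega)) (inv_mem hg) (by simp) fun n => ?_)
    · simpa only [inv_inv] using inv_mem this
    · simp only [Pi.inv_apply, pow_choose_succ_succ, commutatorElement_mul_right_eq_mul_conj,
        Nat.choose_zero_right]
      group
  | j + 1, D + 1, r, τ, h₁, h₂ => by
    have hX'Y := commutator_binomial_binomial_mem hS hw hv (j := j) (D := D + 1) (τ := τ + 1)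
      h₁ (by omega)
    have hXY := commutator_binomial_binomial_mem hS hw hv (j := j) (D := D) (r := r + 1)
      (τ := τ) (by omega) (by omega)
    have hXY' := commutator_binomial_binomial_mem hS hw hv (j := j + 1) (D := D) (r := r + 1)
      (τ := τ) (by omega) h₂
    rw [← add_assoc] at hX'Y
    rw [add_right_comm r 1] at hXY hXY'
    have hX := binomial_mem_binomialSeqs hw (show D ≤ lv by omega)
    have hY := binomial_mem_binomialSeqs hv (show j ≤ lvv by omega)
    have hP := mul_mem (conj_mem_correctionSeqs hX hX'Y) hXY
    have hR := conj_mem_correctionSeqs hY hXY'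
    refine correctionSeqs_summed_succ_le _ _ (hS.mem_of_recursion
      (mul_mem (correctionSeqs_weighted_le_binomialSeqs _ _ hP) (mul_mem hY hX)) (mul_mem hP hR)
      (by simp) fun n => ?_)
    simp only [pow_choose_succ_succ, commutatorElement_mul_mul, Pi.mul_apply, Pi.inv_apply]

theorem commutator_binomial_mem (hS : SumClosed G (lv + 1)) (hw : w ∈ γ lv) {D r : ℕ}
    (h : r + D ≤ lv + 1) {ζ : ℕ → G} (hζ : ζ ∈ binomialSeqs G) :
    (fun n => ⁅w ^ n.choose D, ζ n⁆) ∈ correctionSeqs (Weighted r (lv + 1)) := by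
  induction hζ using Subgroup.closure_induction with
  | mem ζ hζ =>
    obtain ⟨v, j, hv, rfl⟩ := hζ
    simpa using commutator_binomial_binomial_mem hS hw hv (τ := 0) h le_rfl
  | one =>
    simp only [Pi.one_apply, commutatorElement_one_right]
    exact one_mem _
  | mul ζ₁ ζ₂ hζ₁ _ ih₁ ih₂ =>
    convert mul_mem ih₁ (conj_mem_correctionSeqs hζ₁ ih₂) using 1
    funext n
    simp only [Pi.mul_apply, Pi.inv_apply, commutatorElement_mul_right_eq_mul_conj]
    group
  | inv ζ hζ ih =>
    have := inv_mem (conj_mem_correctionSeqs (inv_mem hζ) ih)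
    convert this using 1
    funext n
    simp only [Pi.inv_apply, Pi.mul_apply, commutatorElement_def]
    group

end

-- Twisted form of `∑_{i<n} (i choose d) = (n choose d+1)`.
theorem twistedProd_binomial (ξ : ℕ → G) (w : G) (d : ℕ) :
    twistedProd ξ (fun n => w ^ n.choose d) = (fun n => w ^ n.choose (d + 1)) *
      (twistedProd ((fun n => w ^ n.choose d)⁻¹ * ξ)
        ((fun n => w ^ n.choose d)⁻¹ * (fun n => ⁅w⁻¹ ^ n.choose (d + 1), ξ n⁆) *
          (fun n => w ^ n.choose d))⁻¹)⁻¹ := by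
  refine (eq_twistedProd (by simp [twistedProd]) fun n => ?_).symm
  simp only [Pi.mul_apply, Pi.inv_apply, twistedProd, pow_choose_succ_succ,
    commutatorElement_def, inv_pow]
  group

theorem twistedProd_conj_binomial_mem {ls lv r d : ℕ} {w : G} (hS : SumClosed G (lv + 1))
    (hw : w ∈ γ lv) (hP : Weighted r ls d lv) {χ ξ : ℕ → G} (hχ : χ ∈ binomialSeqs G)
    (hξ : ξ ∈ binomialSeqs G) :
    twistedProd ξ (χ * (fun n => w ^ n.choose d) * χ⁻¹) ∈ correctionSeqs (Summed r ls) := by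
  obtain ⟨hrd, hls⟩ := hP
  set W : ℕ → G := fun n => w ^ n.choose d
  have hW : W ∈ binomialSeqs G := binomial_mem_binomialSeqs hw (by omega)
  have hsplit : χ * W * χ⁻¹ = W * fun n => ⁅w⁻¹ ^ n.choose d, χ n⁆ := by
    funext n
    simp only [W, Pi.mul_apply, Pi.inv_apply, commutatorElement_def, inv_pow]
    group
  have hcomm : (fun n => ⁅w⁻¹ ^ n.choose d, χ n⁆) ∈ correctionSeqs (Weighted r (lv + 1)) :=
    commutator_binomial_mem hS (inv_mem hw) (by omega) hχ
  have hcomm' :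
      (fun n => ⁅w⁻¹ ^ n.choose (d + 1), ξ n⁆) ∈ correctionSeqs (Weighted r (lv + 1)) :=
    commutator_binomial_mem hS (inv_mem hw) (by omega) hξ
  have hWξ : W⁻¹ * ξ ∈ binomialSeqs G := mul_mem (inv_mem hW) hξ
  rw [hsplit, twistedProd_mul, twistedProd_binomial]
  refine mul_mem (mul_mem ?_ (inv_mem ?_)) ?_
  · exact binomial_mem_correctionSeqs hw ⟨by omega, by omega, hls⟩
  · refine correctionSeqs_summed_mono (by omega) (hS r _ _ hWξ ?_)
    simpa using inv_mem (conj_mem_correctionSeqs (inv_mem hW) hcomm')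
  · exact correctionSeqs_summed_mono (by omega) (hS r _ _ hWξ hcomm)

theorem sumClosed_of_forall_lt {ls : ℕ} (h : ∀ lv, ls < lv → SumClosed G lv) :
    SumClosed G ls := by
  intro r ξ g hξ hg
  induction hg using Subgroup.closure_induction generalizing ξ with
  | mem f hf =>
    obtain ⟨w, d, lv, hw, hP, χ, hχ, rfl⟩ := hf
    exact twistedProd_conj_binomial_mem (h _ (by unfold Weighted at hP; omega)) hw hP hχ hξ
  | one =>
    rw [twistedProd_one]
    exact one_mem _
  | mul g₁ g₂ hg₁ _ ih₁ ih₂ =>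
    rw [twistedProd_mul]
    exact mul_mem (ih₁ _ hξ)
      (ih₂ _ (mul_mem (inv_mem (correctionSeqs_weighted_le_binomialSeqs _ _ hg₁)) hξ))
  | inv g hg ih =>
    rw [twistedProd_inv]
    exact inv_mem (ih _ (mul_mem (correctionSeqs_weighted_le_binomialSeqs _ _ hg) hξ))

theorem sumClosed_of_le {J ls : ℕ} (hJ : γ J = ⊥) (h : J ≤ ls) : SumClosed G ls := by
  intro r ξ g _ hg
  have : g = 1 := funext fun N => apply_eq_one_of_mem_correctionSeqs hg fun d lv hP w hw => by
    simp [eq_one_of_mem_lowerCentralSeries_of_le hJ (h.trans hP.2) hw]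
  rw [this, twistedProd_one]
  exact one_mem _

theorem sumClosed {J : ℕ} (hJ : γ J = ⊥) (ls : ℕ) : SumClosed G ls := by
  induction h : J - ls using Nat.strong_induction_on generalizing ls with
  | _ t ih =>
    rcases Nat.eq_zero_or_pos t with rfl | ht
    · exact sumClosed_of_le hJ (by omega)
    · exact sumClosed_of_forall_lt fun lv hlv => ih (J - lv) (by omega) lv rfl

theorem commutator_pow_mem_correctionSeqs {α : ℕ} (hS : SumClosed G (α + 1)) {u : G}
    (hu : u ∈ γ α) (a : G) :
    (fun n => ⁅u, a ^ n⁆) ∈ correctionSeqs (Summed (α + 1) (α + 1)) := by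
  refine hS.mem_of_recursion (const_mem_binomialSeqs (⁅u, a⁆ * a)) (g := fun _ => ⁅u, a⁆) ?_
    (by simp) fun n => ?_
  · simpa using binomial_mem_correctionSeqs (d := 0)
      (commutatorElement_mem_lowerCentralSeries_succ hu a) ⟨le_rfl, le_rfl⟩
  · simp only [pow_succ', commutatorElement_def]
    group

theorem commutator_pow_deviation_mem {α : ℕ} (hS : SumClosed G (α + 2)) {u : G}
    (hu : u ∈ γ α) (a : G) :
    (fun n => (⁅u, a⁆ ^ n)⁻¹ * ⁅u, a ^ n⁆) ∈ correctionSeqs (Summed (α + 1) (α + 2)) := by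
  have hc : ⁅u, a⁆⁻¹ ∈ γ (α + 1) :=
    inv_mem (commutatorElement_mem_lowerCentralSeries_succ hu a)
  refine hS.mem_of_recursion (const_mem_binomialSeqs ⁅u, a⁆⁻¹)
    (correctionSeqs_summed_succ_le _ _ (commutator_pow_mem_correctionSeqs hS hc a)) (by simp)
    fun n => ?_
  simp only [pow_succ, commutatorElement_def]
  group

theorem mul_pow_deviation_mem {ℓ : ℕ} (hS : SumClosed G (ℓ + 1)) {x y : G} (hx : x ∈ γ ℓ) :
    (fun n => (x ^ n * y ^ n)⁻¹ * (x * y) ^ n) ∈ correctionSeqs (Summed ℓ (ℓ + 1)) := by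
  have hK := correctionSeqs_summed_succ_le _ _
    (commutator_pow_mem_correctionSeqs hS (inv_mem hx) y⁻¹)
  have := hS.mem_of_recursion (f := fun n => ((x * y) ^ n)⁻¹ * (x ^ n * y ^ n))
    (const_mem_binomialSeqs (x * y)⁻¹)
    (conj_mem_correctionSeqs (const_mem_binomialSeqs y⁻¹) hK) (by simp) fun n => ?_
  · convert inv_mem this using 1
    funext n
    simp
  · simp only [Pi.mul_apply, Pi.inv_apply, pow_succ, commutatorElement_def]
    group

theorem pow_eq_one_of_mem_lowerCentralSeries_succ {ℓ N : ℕ} (hS : SumClosed G (ℓ + 2))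
    (hN : ∀ d lv, Summed (ℓ + 1) (ℓ + 2) d lv → ∀ w ∈ γ lv, w ^ N.choose d = 1)
    (hcomm : ∀ h ∈ γ ℓ, ∀ a : G, ⁅h, a ^ N⁆ = 1) : ∀ g ∈ γ (ℓ + 1), g ^ N = 1 := by
  intro g hg
  induction hg using Subgroup.closure_induction with
  | mem g hg =>
    obtain ⟨h, hh, a, -, rfl⟩ := hg
    have := apply_eq_one_of_mem_correctionSeqs (commutator_pow_deviation_mem hS hh a) hN
    rw [inv_mul_eq_one] at this
    rw [this, hcomm h hh]
  | one => exact one_pow N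
  | mul x y hx _ ihx ihy =>
    have := apply_eq_one_of_mem_correctionSeqs (mul_pow_deviation_mem (y := y) hS hx) hN
    rw [inv_mul_eq_one] at this
    rw [← this, ihx, ihy, one_mul]
  | inv x _ ih => rw [inv_pow, ih, inv_one]

theorem pow_eq_one_of_mem_lowerCentralSeries {p e k c : ℕ} (hp : p.Prime) (hc : 1 ≤ c)
    (hbot : γ (c + k) = ⊥) (hcomm : ∀ h ∈ γ (c - 1), ∀ x : G, ⁅h, x ^ p ^ e⁆ = 1) :
    ∀ ℓ, c ≤ ℓ → ∀ g ∈ γ ℓ, g ^ p ^ (e + Nat.log p k * (c + k - 1 - ℓ)) = 1 := by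
  set m := Nat.log p k
  intro ℓ
  induction h : c + k - ℓ using Nat.strong_induction_on generalizing ℓ with
  | _ t ih =>
  intro hℓ g hg
  by_cases hdeep : c + k ≤ ℓ
  · simp [eq_one_of_mem_lowerCentralSeries_of_le hbot hdeep hg]
  obtain ⟨ℓ, rfl⟩ : ∃ ℓ', ℓ = ℓ' + 1 := ⟨ℓ - 1, by omega⟩
  refine pow_eq_one_of_mem_lowerCentralSeries_succ (sumClosed hbot _) ?_ ?_ g hg
  · rintro d lv ⟨hd, hdlv, hlv⟩ w hw
    by_cases hwdeep : c + k ≤ lv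
    · simp [eq_one_of_mem_lowerCentralSeries_of_le hbot hwdeep hw]
    have hexp := ih (c + k - lv) (by omega) lv rfl (by omega) w hw
    have hle : e + m * (c + k - 1 - lv) ≤ e + m * (c + k - 1 - (ℓ + 1)) - m := by
      have : m * (c + k - 1 - lv) + m ≤ m * (c + k - 1 - (ℓ + 1)) := by
        rw [← Nat.mul_succ]
        exact Nat.mul_le_mul_left m (by omega)
      omega
    obtain ⟨q, hq⟩ := (Nat.pow_dvd_pow p hle).trans
      (Nat.pow_sub_log_dvd_choose_prime_pow hp hd (by omega : d ≤ k))
    rw [hq, pow_mul, hexp, one_pow]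
  · intro h hh a
    rw [pow_add, mul_comm, pow_mul]
    exact hcomm h (Subgroup.lowerCentralSeries_antitone _ (by omega) hh) _

end

theorem pow_mem_iteratedCommutator_of_mem_lowerCentralSeries_general {F : Type*} [Group F]
    (R : Subgroup F) [R.Normal] (p e k c : ℕ) (hp : p.Prime)
    (hc : 1 ≤ c)
    (hnil : (⊤ : Subgroup F).lowerCentralSeries k ≤ R)
    (hexp : ∀ x : F, x ^ (p ^ e) ∈ R)
    (g : F) (hg : g ∈ (⊤ : Subgroup F).lowerCentralSeries c) :
    g ^ (p ^ (e + Nat.log p k * (k - 1))) ∈ iteratedCommutator R c := by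
  set N := iteratedCommutator R c
  set π := QuotientGroup.mk' N
  have hmap : ∀ n, ((⊤ : Subgroup F).lowerCentralSeries n).map π =
      (⊤ : Subgroup (F ⧸ N)).lowerCentralSeries n := fun n => by
    rw [Subgroup.map_lowerCentralSeries, Subgroup.map_top_of_surjective π
      (QuotientGroup.mk'_surjective N)]
  have hbot : (⊤ : Subgroup (F ⧸ N)).lowerCentralSeries (c + k) = ⊥ := by
    rw [← hmap, Subgroup.map_eq_bot_iff, QuotientGroup.ker_mk', add_comm]
    exact lowerCentralSeries_add_le_iteratedCommutator hnil c
  have hcomm : ∀ h ∈ (⊤ : Subgroup (F ⧸ N)).lowerCentralSeries (c - 1), ∀ x : F ⧸ N,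
      ⁅h, x ^ p ^ e⁆ = 1 := by
    rw [← hmap]
    rintro _ ⟨h, hh, rfl⟩ x
    obtain ⟨x, rfl⟩ := QuotientGroup.mk'_surjective N x
    rw [← map_pow, ← map_commutatorElement, QuotientGroup.mk'_apply, QuotientGroup.eq_one_iff]
    have := commutator_lowerCentralSeries_iteratedCommutator_le R (c - 1) 0
      (Subgroup.commutator_mem_commutator hh (hexp x))
    rwa [show c - 1 + 0 + 1 = c by omega] at this
  have := pow_eq_one_of_mem_lowerCentralSeries hp hc hbot hcomm c le_rfl (π g)
    (hmap c ▸ Subgroup.mem_map_of_mem π hg)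
  rwa [show c + k - 1 - c = k - 1 by omega, ← map_pow, QuotientGroup.mk'_apply,
    QuotientGroup.eq_one_iff] at this

/-- Theorem 3.2: if `G = F/R` is a `p`-group of class at most `k` and exponent
dividing `p^e` (i.e. `γ_{k+1}(F) ≤ R` and `x^(p^e) ∈ R` for all `x`), then every
`g ∈ γ_{c+1}(F)` satisfies `g^(p^(e + m(k-1))) ∈ [R, cF]`, where `m = ⌊log_p k⌋`;
that is, the exponent of `γ_{c+1}(F)/[R, cF]` divides `p^(e + m(k-1))`.
(Here `γ_{c+1}(F) = lowerCentralSeries F c`.) -/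
theorem pow_mem_iteratedCommutator_of_mem_lowerCentralSeries {F : Type*} [Group F]
    [IsFreeGroup F] (R : Subgroup F) [R.Normal] (p e k c : ℕ) (hp : p.Prime)
    (he : 1 ≤ e) (hk : 1 ≤ k) (hc : 1 ≤ c)
    (hnil : (⊤ : Subgroup F).lowerCentralSeries k ≤ R)
    (hexp : ∀ x : F, x ^ (p ^ e) ∈ R)
    (g : F) (hg : g ∈ (⊤ : Subgroup F).lowerCentralSeries c) :
    g ^ (p ^ (e + Nat.log p k * (k - 1))) ∈ iteratedCommutator R c :=
  pow_mem_iteratedCommutator_of_mem_lowerCentralSeries_general R p e k c hp hc hnil hexp g hg
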